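/- arXiv:1303.3596 — 5 statements merged into one kernel-verified Lean document; each statement's English description precedes it below -/
import Mathlib

section
/- The number of pairs of sequences (edge decorations e_2,...,e_{n-2} in {curved, straight}, vertex decorations v_2,...,v_{n-2} in {neutral, breaking}) satisfying the Enriques condition (if v_i is breaking then e_i and e_{i+1} are straight, where e_{n-1} is always straight) equals the Fibonacci number F_{2n-4}, for all n ≥ 3. -/
/-- Symbols of Enriques diagrams: `Sum.inl k` is the vertex `v_k`,
`Sum.inr k` is the edge `e_k`. -/
abbrev ESym : Type := ℕ ⊕ ℕ

def vtx (k : ℕ) : ESym := Sum.inl k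
def edg (k : ℕ) : ESym := Sum.inr k

/-- The set `S_n = {v_2,…,v_{n-2}, e_2,…,e_{n-2}}` of undetermined symbols. -/
def symbols (n : ℕ) : Finset ESym :=
  ((Finset.Icc 2 (n - 2)).image vtx) ∪ ((Finset.Icc 2 (n - 2)).image edg)

/-- A code of an Enriques diagram of complexity `n`: a subset `χ ⊆ S_n` such that
`v_i ∈ χ` implies `e_i ∈ χ` and (`e_{i+1} ∈ χ` or `i = n-2`). -/
def IsCode (n : ℕ) (χ : Finset ESym) : Prop :=
  χ ⊆ symbols n ∧
    ∀ i ∈ Finset.Icc 2 (n - 2), vtx i ∈ χ →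
      edg i ∈ χ ∧ (edg (i + 1) ∈ χ ∨ i = n - 2)

instance (n : ℕ) : DecidablePred (IsCode n) := fun χ => by
  unfold IsCode; infer_instance

/-!
A code is read position by position: for `2 ≤ i ≤ n - 2` it contains none of `v_i, e_i`, only
`e_i`, or both. Passing from complexity `k + 3` to `k + 4` adds the position `k + 2`, and a code of
complexity `k + 4` is a code of complexity `k + 3` extended by nothing (possible only when
`v_{k+1}` is absent, since otherwise `e_{k+2}` is forced), by `e_{k+2}`, or by `v_{k+2}, e_{k+2}`.
So if `a_k` counts the codes of complexity `k + 3` without `v_{k+1}` and `c_k` all of them, then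
`a_{k+1} = a_k + c_k` and `c_{k+1} = a_k + 2 c_k`, the recursion of `(F_{2k+1}, F_{2k+2})`.
-/

open Finset

theorem Finset.card_filter_powerset_insert {α : Type*} [DecidableEq α] {s : Finset α} {a : α}
    (ha : a ∉ s) (p : Finset α → Prop) [DecidablePred p] :
    #((insert a s).powerset.filter p) =
      #(s.powerset.filter p) + #(s.powerset.filter fun t => p (insert a t)) := by
  simp only [card_filter]
  exact sum_powerset_insert ha _

lemma vtx_mem_symbols {n i : ℕ} : vtx i ∈ symbols n ↔ 2 ≤ i ∧ i ≤ n - 2 := by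
  simp [symbols, vtx, edg]

lemma edg_mem_symbols {n i : ℕ} : edg i ∈ symbols n ↔ 2 ≤ i ∧ i ≤ n - 2 := by
  simp [symbols, vtx, edg]

@[simp] lemma vtx_inj {i j : ℕ} : vtx i = vtx j ↔ i = j := Sum.inl_injective.eq_iff

@[simp] lemma edg_inj {i j : ℕ} : edg i = edg j ↔ i = j := Sum.inr_injective.eq_iff

@[simp] lemma vtx_ne_edg (i j : ℕ) : vtx i ≠ edg j := Sum.inl_ne_inr

@[simp] lemma edg_ne_vtx (i j : ℕ) : edg i ≠ vtx j := Sum.inr_ne_inl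

lemma isCode_iff {n : ℕ} {χ : Finset ESym} :
    IsCode n χ ↔ χ ⊆ symbols n ∧
      ∀ i, vtx i ∈ χ → edg i ∈ χ ∧ (edg (i + 1) ∈ χ ∨ i = n - 2) := by
  refine and_congr_right fun hχ => ⟨fun h i hi => h i ?_ hi, fun h i _ => h i⟩
  simpa [vtx_mem_symbols] using hχ hi

lemma isCode_insert_vtx_iff {n i : ℕ} {χ : Finset ESym} (hi : vtx i ∈ symbols n)
    (he : edg i ∈ χ) (he' : edg (i + 1) ∈ χ ∨ i = n - 2) :
    IsCode n (insert (vtx i) χ) ↔ IsCode n χ := by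
  simp only [isCode_iff, insert_subset_iff, hi, true_and, mem_insert, edg_ne_vtx, false_or, vtx_inj]
  refine and_congr_right fun _ => ⟨fun h j hj => h j (.inr hj), fun h j => ?_⟩
  rintro (rfl | hj)
  exacts [⟨he, he'⟩, h j hj]

lemma symbols_succ (k : ℕ) :
    symbols (k + 4) = insert (vtx (k + 2)) (insert (edg (k + 2)) (symbols (k + 3))) := by
  ext (i | i) <;> simp [symbols, vtx, edg] <;> omega

lemma vtx_notMem_insert_edg_symbols (k : ℕ) :
    vtx (k + 2) ∉ insert (edg (k + 2)) (symbols (k + 3)) := by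
  simp [symbols, vtx, edg]

lemma edg_notMem_symbols (k : ℕ) : edg (k + 2) ∉ symbols (k + 3) := by
  simp [edg_mem_symbols]

section Extension

variable {k : ℕ} {χ : Finset ESym}

lemma le_of_vtx_mem_of_subset_symbols (hχ : χ ⊆ symbols (k + 3)) {i : ℕ} (h : vtx i ∈ χ) :
    i ≤ k + 1 :=
  (vtx_mem_symbols.mp (hχ h)).2

lemma vtx_notMem_of_subset_symbols (hχ : χ ⊆ symbols (k + 3)) : vtx (k + 2) ∉ χ :=
  fun h => by have := le_of_vtx_mem_of_subset_symbols hχ h; omega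

lemma edg_notMem_of_subset_symbols (hχ : χ ⊆ symbols (k + 3)) : edg (k + 2) ∉ χ :=
  fun h => edg_notMem_symbols k (hχ h)

lemma subset_symbols_succ (hχ : χ ⊆ symbols (k + 3)) : χ ⊆ symbols (k + 4) := by
  rw [symbols_succ]
  exact hχ.trans ((subset_insert _ _).trans (subset_insert _ _))

lemma isCode_succ_iff (hχ : χ ⊆ symbols (k + 3)) :
    IsCode (k + 4) χ ↔ IsCode (k + 3) χ ∧ vtx (k + 1) ∉ χ := by
  simp only [isCode_iff, hχ, subset_symbols_succ hχ, true_and]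
  constructor
  · intro h
    refine ⟨fun i hi => ⟨(h i hi).1, .inl ((h i hi).2.resolve_right ?_)⟩, fun hv => ?_⟩
    · have := le_of_vtx_mem_of_subset_symbols hχ hi; omega
    · exact edg_notMem_of_subset_symbols hχ ((h _ hv).2.resolve_right (by omega))
  · rintro ⟨h, hv⟩ i hi
    refine ⟨(h i hi).1, .inl ((h i hi).2.resolve_right ?_)⟩
    rintro rfl
    exact hv hi

lemma isCode_succ_insert_edg_iff (hχ : χ ⊆ symbols (k + 3)) :
    IsCode (k + 4) (insert (edg (k + 2)) χ) ↔ IsCode (k + 3) χ := by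
  simp only [isCode_iff, insert_subset_iff, edg_mem_symbols, le_add_iff_nonneg_left, zero_le,
    Nat.reduceSubDiff, Std.le_refl, and_self, subset_symbols_succ hχ, mem_insert, vtx_ne_edg,
    false_or, edg_inj, Nat.add_right_cancel_iff, true_and, hχ]
  refine forall_congr' fun i => imp_congr_right fun hi => ?_
  have := le_of_vtx_mem_of_subset_symbols hχ hi
  grind

lemma not_isCode_succ_insert_vtx (hχ : χ ⊆ symbols (k + 3)) :
    ¬ IsCode (k + 4) (insert (vtx (k + 2)) χ) := by
  intro h
  have he := ((isCode_iff.mp h).2 (k + 2) (mem_insert_self _ _)).1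
  exact edg_notMem_of_subset_symbols hχ ((mem_insert.mp he).resolve_left (edg_ne_vtx _ _))

lemma isCode_succ_insert_vtx_insert_edg_iff (hχ : χ ⊆ symbols (k + 3)) :
    IsCode (k + 4) (insert (vtx (k + 2)) (insert (edg (k + 2)) χ)) ↔ IsCode (k + 3) χ :=
  (isCode_insert_vtx_iff (by simp [vtx_mem_symbols]) (mem_insert_self _ _) (.inr rfl)).trans
    (isCode_succ_insert_edg_iff hχ)

end Extension

def codes (n : ℕ) : Finset (Finset ESym) := (symbols n).powerset.filter (IsCode n)

lemma card_codes_succ (k : ℕ) :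
    #(codes (k + 4)) = #((codes (k + 3)).filter (vtx (k + 1) ∉ ·)) + 2 * #(codes (k + 3)) := by
  rw [codes, symbols_succ, card_filter_powerset_insert (vtx_notMem_insert_edg_symbols k),
    card_filter_powerset_insert (edg_notMem_symbols k),
    card_filter_powerset_insert (edg_notMem_symbols k), codes, filter_filter,
    filter_congr fun t ht => isCode_succ_iff (mem_powerset.mp ht),
    filter_congr fun t ht => isCode_succ_insert_edg_iff (mem_powerset.mp ht),
    filter_congr fun t ht => isCode_succ_insert_vtx_insert_edg_iff (mem_powerset.mp ht),
    filter_false_of_mem fun t ht => not_isCode_succ_insert_vtx (mem_powerset.mp ht), card_empty]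
  ring

lemma card_codes_succ_filter (k : ℕ) :
    #((codes (k + 4)).filter (vtx (k + 2) ∉ ·)) =
      #((codes (k + 3)).filter (vtx (k + 1) ∉ ·)) + #(codes (k + 3)) := by
  have hv : ∀ t ∈ (insert (edg (k + 2)) (symbols (k + 3))).powerset,
      ¬ (IsCode (k + 4) (insert (vtx (k + 2)) t) ∧ vtx (k + 2) ∉ insert (vtx (k + 2)) t) :=
    fun t _ h => h.2 (mem_insert_self _ t)
  rw [codes, codes, filter_filter, filter_filter, symbols_succ,
    card_filter_powerset_insert (vtx_notMem_insert_edg_symbols k),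
    card_filter_powerset_insert (edg_notMem_symbols k), filter_false_of_mem hv, card_empty,
    add_zero]
  congr 2
  · refine filter_congr fun t ht => ?_
    rw [mem_powerset] at ht
    rw [isCode_succ_iff ht, and_iff_left (vtx_notMem_of_subset_symbols ht)]
  · refine filter_congr fun t ht => ?_
    rw [mem_powerset] at ht
    simp [isCode_succ_insert_edg_iff ht, vtx_notMem_of_subset_symbols ht]

lemma card_codes_eq_fib (k : ℕ) :
    #((codes (k + 3)).filter (vtx (k + 1) ∉ ·)) = Nat.fib (2 * k + 1) ∧
      #(codes (k + 3)) = Nat.fib (2 * k + 2) := by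
  induction k with
  | zero => decide
  | succ k ih =>
    rw [card_codes_succ_filter, card_codes_succ, ih.1, ih.2]
    have h₁ : Nat.fib (2 * (k + 1) + 1) = Nat.fib (2 * k + 1) + Nat.fib (2 * k + 2) :=
      Nat.fib_add_two
    have h₂ : Nat.fib (2 * (k + 1) + 2) = Nat.fib (2 * k + 2) + Nat.fib (2 * (k + 1) + 1) :=
      Nat.fib_add_two
    omega

/-- The number of Enriques-diagram decoration patterns (codes) of complexity
`n ≥ 3` is the Fibonacci number `F_{2n-4}`. -/
theorem stmt0 (n : ℕ) (hn : 3 ≤ n) :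
    ((symbols n).powerset.filter (IsCode n)).card = Nat.fib (2 * n - 4) := by
  obtain ⟨k, rfl⟩ := Nat.exists_eq_add_of_le' hn
  rw [show 2 * (k + 3) - 4 = 2 * k + 2 by omega]
  exact (card_codes_eq_fib k).2
end

section
/- The duality map Δ_n on codes, defined by: v_k ∈ Δ_n(χ) if and only if e_{n-k} ∉ χ, and e_k ∈ Δ_n(χ) if and only if v_{n-k} ∉ χ, maps codes of Enriques diagrams of complexity n to codes, is an involution, and reverses the inclusion partial order on K_n. -/
/-- The duality `Δ_n` on codes: `v_k ∈ Δ_n(χ)` iff `e_{n-k} ∉ χ`, and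
`e_k ∈ Δ_n(χ)` iff `v_{n-k} ∉ χ` (for `k ∈ {2,…,n-2}`). -/
def dual (n : ℕ) (χ : Finset ESym) : Finset ESym :=
  ((Finset.Icc 2 (n - 2)).filter (fun k => edg (n - k) ∉ χ)).image vtx ∪
  ((Finset.Icc 2 (n - 2)).filter (fun k => vtx (n - k) ∉ χ)).image edg

/-! The dual of `χ` is the complement of the image of `χ` under the reflection `v_k ↔ e_{n-k}`
of `S_n`. Complement and reflection are both involutive and inclusion reverses under the
complement, which gives the last two claims. For the code condition, `v_i ∈ Δ_n(χ)` means
`e_{n-i} ∉ χ`; then `v_{n-i} ∉ χ` (else `e_{n-i} ∈ χ`), i.e. `e_i ∈ Δ_n(χ)`, and, unless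
`i = n-2`, `v_{n-i-1} ∉ χ` (else `e_{n-i} ∈ χ`), i.e. `e_{i+1} ∈ Δ_n(χ)`. -/

@[simp]
lemma mem_dual_vtx (n k : ℕ) (χ : Finset ESym) :
    vtx k ∈ dual n χ ↔ k ∈ Finset.Icc 2 (n - 2) ∧ edg (n - k) ∉ χ := by
  simp only [dual, Finset.mem_union, Finset.mem_image, Finset.mem_filter]
  simp [vtx, edg]

@[simp]
lemma mem_dual_edg (n k : ℕ) (χ : Finset ESym) :
    edg k ∈ dual n χ ↔ k ∈ Finset.Icc 2 (n - 2) ∧ vtx (n - k) ∉ χ := by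
  simp only [dual, Finset.mem_union, Finset.mem_image, Finset.mem_filter]
  simp [vtx, edg]

@[simp]
lemma mem_symbols_vtx (n k : ℕ) : vtx k ∈ symbols n ↔ k ∈ Finset.Icc 2 (n - 2) := by
  simp [symbols, vtx, edg]

@[simp]
lemma mem_symbols_edg (n k : ℕ) : edg k ∈ symbols n ↔ k ∈ Finset.Icc 2 (n - 2) := by
  simp [symbols, vtx, edg]

lemma ESym.subset_iff {s t : Finset ESym} :
    s ⊆ t ↔ (∀ k, vtx k ∈ s → vtx k ∈ t) ∧ (∀ k, edg k ∈ s → edg k ∈ t) :=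
  ⟨fun h => ⟨fun _ hk => h hk, fun _ hk => h hk⟩,
    fun ⟨hv, he⟩ s hs => by rcases s with k | k; exacts [hv k hs, he k hs]⟩

lemma dual_subset_symbols (n : ℕ) (χ : Finset ESym) : dual n χ ⊆ symbols n :=
  ESym.subset_iff.2 ⟨fun k hk => by simp_all, fun k hk => by simp_all⟩

lemma dual_subset_dual (n : ℕ) {χ χ' : Finset ESym} (h : χ ⊆ χ') : dual n χ' ⊆ dual n χ :=
  ESym.subset_iff.2 ⟨fun _ hk => by simp only [mem_dual_vtx] at hk ⊢; exact ⟨hk.1, mt (@h _) hk.2⟩,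
    fun _ hk => by simp only [mem_dual_edg] at hk ⊢; exact ⟨hk.1, mt (@h _) hk.2⟩⟩

lemma sub_mem_Icc_of_mem_Icc {n k : ℕ} (hk : k ∈ Finset.Icc 2 (n - 2)) :
    n - k ∈ Finset.Icc 2 (n - 2) ∧ n - (n - k) = k := by
  simp only [Finset.mem_Icc] at hk ⊢
  omega

lemma mem_dual_dual_vtx (n k : ℕ) (χ : Finset ESym) :
    vtx k ∈ dual n (dual n χ) ↔ k ∈ Finset.Icc 2 (n - 2) ∧ vtx k ∈ χ := by
  rw [mem_dual_vtx, mem_dual_edg]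
  refine and_congr_right fun hk => ?_
  obtain ⟨hk', hkk⟩ := sub_mem_Icc_of_mem_Icc hk
  simp [hk', hkk]

lemma mem_dual_dual_edg (n k : ℕ) (χ : Finset ESym) :
    edg k ∈ dual n (dual n χ) ↔ k ∈ Finset.Icc 2 (n - 2) ∧ edg k ∈ χ := by
  rw [mem_dual_edg, mem_dual_vtx]
  refine and_congr_right fun hk => ?_
  obtain ⟨hk', hkk⟩ := sub_mem_Icc_of_mem_Icc hk
  simp [hk', hkk]

lemma dual_dual {n : ℕ} {χ : Finset ESym} (hχ : χ ⊆ symbols n) : dual n (dual n χ) = χ := by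
  refine subset_antisymm (ESym.subset_iff.2 ⟨fun k hk => ?_, fun k hk => ?_⟩)
    (ESym.subset_iff.2 ⟨fun k hk => ?_, fun k hk => ?_⟩)
  · exact ((mem_dual_dual_vtx n k χ).1 hk).2
  · exact ((mem_dual_dual_edg n k χ).1 hk).2
  · exact (mem_dual_dual_vtx n k χ).2 ⟨(mem_symbols_vtx n k).1 (hχ hk), hk⟩
  · exact (mem_dual_dual_edg n k χ).2 ⟨(mem_symbols_edg n k).1 (hχ hk), hk⟩

theorem isCode_dual {n : ℕ} {χ : Finset ESym} (hχ : IsCode n χ) : IsCode n (dual n χ) := by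
  refine ⟨dual_subset_symbols n χ, fun i hi hv => ?_⟩
  rw [Finset.mem_Icc] at hi
  obtain ⟨-, he⟩ := (mem_dual_vtx n i χ).1 hv
  have hvi : vtx (n - i) ∉ χ := fun h => he (hχ.2 _ (Finset.mem_Icc.2 (by omega)) h).1
  refine ⟨(mem_dual_edg n i χ).2 ⟨Finset.mem_Icc.2 (by omega), hvi⟩, ?_⟩
  by_cases hlast : i = n - 2
  · exact Or.inr hlast
  refine Or.inl ((mem_dual_edg n _ χ).2 ⟨Finset.mem_Icc.2 (by omega), fun h => ?_⟩)
  obtain ⟨-, h | h⟩ := hχ.2 _ (Finset.mem_Icc.2 (by omega)) h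
  · exact he (by rwa [show n - (i + 1) + 1 = n - i by omega] at h)
  · omega

theorem stmt4_general (n : ℕ) :
    (∀ χ, IsCode n χ → IsCode n (dual n χ)) ∧
    (∀ χ, IsCode n χ → dual n (dual n χ) = χ) ∧
    (∀ χ χ', IsCode n χ → IsCode n χ' → χ ⊆ χ' → dual n χ' ⊆ dual n χ) :=
  ⟨fun _ => isCode_dual, fun _ hχ => dual_dual hχ.1, fun _ _ _ _ => dual_subset_dual n⟩

/-- The duality map `Δ_n` sends codes to codes, is an involution on codes, and
reverses the inclusion order on codes. -/
theorem stmt4 (n : ℕ) (hn : 3 ≤ n) :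
    (∀ χ, IsCode n χ → IsCode n (dual n χ)) ∧
    (∀ χ, IsCode n χ → dual n (dual n χ) = χ) ∧
    (∀ χ χ', IsCode n χ → IsCode n χ' → χ ⊆ χ' → dual n χ' ⊆ dual n χ) :=
  stmt4_general n
end

section
/- For every n ≥ 3, the number of self-dual codes of Enriques diagrams of complexity n (i.e., codes χ with Δ_n(χ) = χ) is the Fibonacci number F_{n-2}. -/
/-!
A self-dual code is determined by its set `A` of vertex indices: duality forces
`e_k ∈ χ ↔ v_{n-k} ∉ χ`, and the code axioms then say exactly that no two (not necessarily
distinct) elements of `A` sum to `n` or `n - 1`. So we count the subsets of `[2, n-2]`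
independent for this relation. On an interval `[a, b]` with `a + b ∈ {n, n - 1}` one endpoint
clashes only with the other, so deleting it gives the Fibonacci recursion; the self-clashing
centre `n / 2` is why the count is `F_{n-2}` rather than `F_{n-1}`.
-/

open Finset

def indepSets {α : Type*} (r : α → α → Prop) [DecidableRel r] (S : Finset α) :
    Finset (Finset α) :=
  S.powerset.filter fun A => ∀ i ∈ A, ∀ j ∈ A, ¬ r i j

section
variable {α : Type*} {r : α → α → Prop} [DecidableRel r] {S A : Finset α}

lemma mem_indepSets : A ∈ indepSets r S ↔ A ⊆ S ∧ ∀ i ∈ A, ∀ j ∈ A, ¬ r i j := by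
  rw [indepSets, mem_filter, mem_powerset]

lemma indepSets_singleton_of_rel {a : α} (ha : r a a) : indepSets r {a} = {∅} := by
  ext A
  rw [mem_indepSets, subset_singleton_iff, mem_singleton]
  constructor
  · rintro ⟨rfl | rfl, hA⟩
    · rfl
    · exact absurd ha (hA a (mem_singleton_self a) a (mem_singleton_self a))
  · rintro rfl
    simp

variable [DecidableEq α] {x y : α}

lemma filter_notMem_indepSets :
    (indepSets r S).filter (x ∉ ·) = indepSets r (S.erase x) := by
  ext A
  simp only [mem_filter, mem_indepSets, subset_erase]
  tauto

lemma card_filter_mem_indepSets [Std.Symm r] (hx : x ∈ S) (hxy : x ≠ y)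
    (hnbr : ∀ z ∈ S, r x z ↔ z = y) :
    #((indepSets r S).filter (x ∈ ·)) = #(indepSets r ((S.erase x).erase y)) := by
  apply card_nbij' (·.erase x) (insert x)
  · intro A hA
    simp only [coe_filter, mem_indepSets] at hA
    obtain ⟨⟨hAS, hAr⟩, hxA⟩ := hA
    simp only [mem_coe, mem_indepSets, subset_erase]
    refine ⟨⟨⟨(erase_subset x A).trans hAS, notMem_erase x A⟩, fun hyA => ?_⟩,
      fun i hi j hj => hAr i (mem_of_mem_erase hi) j (mem_of_mem_erase hj)⟩
    exact hAr x hxA y (mem_of_mem_erase hyA) ((hnbr y (hAS (mem_of_mem_erase hyA))).2 rfl)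
  · intro B hB
    simp only [mem_coe, mem_indepSets, subset_erase] at hB
    obtain ⟨⟨⟨hBS, hxB⟩, hyB⟩, hBr⟩ := hB
    have hxz : ∀ z ∈ B, ¬ r x z := fun z hz h => hyB ((hnbr z (hBS hz)).1 h ▸ hz)
    rw [mem_coe, mem_filter, mem_indepSets]
    refine ⟨⟨insert_subset hx hBS, ?_⟩, mem_insert_self x B⟩
    simp only [mem_insert, forall_eq_or_imp]
    exact ⟨⟨fun h => hxy ((hnbr x hx).1 h), hxz⟩,
      fun i hi => ⟨fun h => hxz i hi (symm h), hBr i hi⟩⟩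
  · intro A hA
    simp only [coe_filter] at hA
    exact insert_erase hA.2
  · intro B hB
    simp only [mem_coe, mem_indepSets, subset_erase] at hB
    exact erase_insert hB.1.1.2

lemma card_indepSets_eq_add_of_unique_adj [Std.Symm r] (hx : x ∈ S) (hxy : x ≠ y)
    (hnbr : ∀ z ∈ S, r x z ↔ z = y) :
    #(indepSets r S) = #(indepSets r (S.erase x)) + #(indepSets r ((S.erase x).erase y)) := by
  rw [← card_filter_mem_indepSets hx hxy hnbr, ← filter_notMem_indepSets, add_comm,
    card_filter_add_card_filter_not]
end

def Clash (n i j : ℕ) : Prop := i + j = n ∨ i + j + 1 = n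

instance (n : ℕ) : DecidableRel (Clash n) := fun _ _ => inferInstanceAs (Decidable (_ ∨ _))

instance (n : ℕ) : Std.Symm (Clash n) := ⟨fun i j h => by unfold Clash at *; omega⟩

theorem card_indepSets_clash_Icc {n a b : ℕ} (hab : a ≤ b + 1)
    (h : a + b = n ∨ a + b + 1 = n) :
    #(indepSets (Clash n) (Icc a b)) = Nat.fib (b + 2 - a) := by
  induction hd : b - a using Nat.strong_induction_on generalizing a b with
  | _ d ih =>
  obtain hba | rfl | hlt := (show b + 1 = a ∨ a = b ∨ a < b by omega)
  · rw [Icc_eq_empty (by omega), show b + 2 - a = 1 by omega]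
    rfl
  · rw [Icc_self, indepSets_singleton_of_rel (show Clash n a a from h),
      Nat.add_sub_cancel_left]
    rfl
  · rw [show b + 2 - a = (b - a) + 2 by omega, Nat.fib_add_two]
    rcases h with h | h
    · rw [card_indepSets_eq_add_of_unique_adj (x := b) (y := a) (by simp only [mem_Icc]; omega)
        (by omega) (fun z hz => by simp only [mem_Icc] at hz; unfold Clash; omega),
        show (Icc a b).erase b = Icc a (b - 1) by ext; simp only [mem_erase, mem_Icc]; omega,
        show (Icc a (b - 1)).erase a = Icc (a + 1) (b - 1) by
          ext; simp only [mem_erase, mem_Icc]; omega,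
        ih (b - 1 - a) (by omega) (by omega) (by omega) rfl,
        ih (b - 1 - (a + 1)) (by omega) (by omega) (by omega) rfl, add_comm]
      congr 2 <;> omega
    · rw [card_indepSets_eq_add_of_unique_adj (x := a) (y := b) (by simp only [mem_Icc]; omega)
        (by omega) (fun z hz => by simp only [mem_Icc] at hz; unfold Clash; omega),
        show (Icc a b).erase a = Icc (a + 1) b by ext; simp only [mem_erase, mem_Icc]; omega,
        show (Icc (a + 1) b).erase b = Icc (a + 1) (b - 1) by
          ext; simp only [mem_erase, mem_Icc]; omega,
        ih (b - (a + 1)) (by omega) (by omega) (by omega) rfl,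
        ih (b - 1 - (a + 1)) (by omega) (by omega) (by omega) rfl, add_comm]
      congr 2 <;> omega

lemma symbols_eq_disjSum (n : ℕ) : symbols n = (Icc 2 (n - 2)).disjSum (Icc 2 (n - 2)) := by
  ext (k | k) <;> simp [symbols, vtx, edg]

lemma dual_eq_disjSum (n : ℕ) (χ : Finset ESym) :
    dual n χ = ((Icc 2 (n - 2)).filter (fun k => n - k ∉ χ.toRight)).disjSum
      ((Icc 2 (n - 2)).filter (fun k => n - k ∉ χ.toLeft)) := by
  ext (k | k) <;> simp [dual, mem_filter] <;> simp [vtx, edg]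

def codeOfVertices (n : ℕ) (A : Finset ℕ) : Finset ESym :=
  A.disjSum ((Icc 2 (n - 2)).filter (fun k => n - k ∉ A))

section
variable {n : ℕ} {A : Finset ℕ} {χ : Finset ESym}

lemma eq_codeOfVertices_of_dual_eq (h : dual n χ = χ) : χ = codeOfVertices n χ.toLeft := by
  rw [dual_eq_disjSum, disjSum_eq_iff] at h
  rw [codeOfVertices, eq_disjSum_iff]
  exact ⟨rfl, h.2.symm⟩

lemma dual_codeOfVertices (hA : A ⊆ Icc 2 (n - 2)) :
    dual n (codeOfVertices n A) = codeOfVertices n A := by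
  rw [dual_eq_disjSum, codeOfVertices, toLeft_disjSum, toRight_disjSum, disjSum_inj]
  refine ⟨?_, rfl⟩
  ext k
  simp only [mem_filter, mem_Icc, not_and, not_not]
  constructor
  · rintro ⟨hk, hnk⟩
    simpa [Nat.sub_sub_self (show k ≤ n by omega)] using hnk ⟨by omega, by omega⟩
  · intro hk
    have := mem_Icc.1 (hA hk)
    refine ⟨this, fun _ => ?_⟩
    rwa [Nat.sub_sub_self (by omega)]

lemma codeOfVertices_subset_symbols (hA : A ⊆ Icc 2 (n - 2)) :
    codeOfVertices n A ⊆ symbols n := by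
  rw [codeOfVertices, symbols_eq_disjSum]
  exact disjSum_mono hA (filter_subset _ _)

lemma isCode_codeOfVertices_iff (hA : A ⊆ Icc 2 (n - 2)) :
    IsCode n (codeOfVertices n A) ↔ ∀ i ∈ A, ∀ j ∈ A, ¬ Clash n i j := by
  have hbd : ∀ i ∈ A, 2 ≤ i ∧ i ≤ n - 2 := fun i hi => mem_Icc.1 (hA hi)
  have hv : ∀ i, vtx i ∈ codeOfVertices n A ↔ i ∈ A := fun _ => inl_mem_disjSum
  have he : ∀ i, edg i ∈ codeOfVertices n A ↔ (2 ≤ i ∧ i ≤ n - 2) ∧ n - i ∉ A := fun _ => by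
    simp [codeOfVertices, edg]
  simp only [IsCode, codeOfVertices_subset_symbols hA, true_and, hv, he, mem_Icc]
  constructor
  · rintro h i hi j hj (hij | hij)
    · exact (h i (hbd i hi) hi).1.2 (by rwa [show n - i = j by omega])
    · rcases (h i (hbd i hi) hi).2 with ⟨_, hnext⟩ | hlast
      · exact hnext (by rwa [show n - (i + 1) = j by omega])
      · have := hbd j hj
        omega
  · intro h i hi hiA
    refine ⟨⟨hi, fun hiA' => h i hiA _ hiA' (Or.inl (by omega))⟩, ?_⟩
    rcases (show i = n - 2 ∨ i + 1 ≤ n - 2 by omega) with hlast | hnext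
    · exact Or.inr hlast
    · exact Or.inl ⟨⟨by omega, hnext⟩, fun hj => h i hiA _ hj (Or.inr (by omega))⟩

end

theorem card_selfDual_codes_eq_card_indepSets (n : ℕ) :
    #((symbols n).powerset.filter (fun χ => IsCode n χ ∧ dual n χ = χ)) =
      #(indepSets (Clash n) (Icc 2 (n - 2))) := by
  apply card_nbij' toLeft (codeOfVertices n)
  · intro χ hχ
    simp only [coe_filter, mem_powerset] at hχ
    obtain ⟨-, hcode, hdual⟩ := hχ
    have hsub : χ.toLeft ⊆ Icc 2 (n - 2) :=
      (subset_disjSum.1 (symbols_eq_disjSum n ▸ hcode.1)).1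
    rw [mem_coe, mem_indepSets]
    refine ⟨hsub, (isCode_codeOfVertices_iff hsub).1 ?_⟩
    rwa [← eq_codeOfVertices_of_dual_eq hdual]
  · intro A hA
    rw [mem_coe, mem_indepSets] at hA
    simp only [coe_filter, mem_powerset]
    exact ⟨codeOfVertices_subset_symbols hA.1, (isCode_codeOfVertices_iff hA.1).2 hA.2,
      dual_codeOfVertices hA.1⟩
  · intro χ hχ
    simp only [coe_filter] at hχ
    exact (eq_codeOfVertices_of_dual_eq hχ.2.2).symm
  · intro A _
    exact toLeft_disjSum

/-- For `n ≥ 3`, the number of self-dual codes of complexity `n` is the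
Fibonacci number `F_{n-2}`. -/
theorem stmt6 (n : ℕ) (hn : 3 ≤ n) :
    ((symbols n).powerset.filter (fun χ => IsCode n χ ∧ dual n χ = χ)).card =
      Nat.fib (n - 2) := by
  rw [card_selfDual_codes_eq_card_indepSets,
    card_indepSets_clash_Icc (by omega) (Or.inl (by omega)), Nat.add_sub_cancel]
end

section
/- If χ is a self-dual code of complexity 2m (m ≥ 2), then e_m ∈ χ and v_m ∉ χ, and the map sending χ to χ ∩ S_{m+1} is a bijection from the set of self-dual codes of complexity 2m onto the set of all codes of complexity m+1. -/
def symIndex : ESym → ℕ := Sum.elim id id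

/-- The symbol that `Δ_n` pairs with a given one. -/
def opposite (n : ℕ) : ESym → ESym := Sum.elim (fun k => edg (n - k)) (fun k => vtx (n - k))

section Symbols

variable {n k l : ℕ} {x : ESym} {χ : Finset ESym}

@[simp] lemma vtx_inj_s7 : vtx k = vtx l ↔ k = l := Sum.inl_injective.eq_iff
@[simp] lemma edg_inj_s7 : edg k = edg l ↔ k = l := Sum.inr_injective.eq_iff
@[simp] lemma vtx_ne_edg_s7 : vtx k ≠ edg l := Sum.inl_ne_inr
@[simp] lemma edg_ne_vtx_s7 : edg k ≠ vtx l := Sum.inr_ne_inl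

@[simp] lemma symIndex_vtx : symIndex (vtx k) = k := rfl
@[simp] lemma symIndex_edg : symIndex (edg k) = k := rfl
@[simp] lemma opposite_vtx : opposite n (vtx k) = edg (n - k) := rfl
@[simp] lemma opposite_edg : opposite n (edg k) = vtx (n - k) := rfl

lemma eq_vtx_or_eq_edg (x : ESym) : (∃ k, x = vtx k) ∨ ∃ k, x = edg k := by
  rcases x with k | k
  exacts [Or.inl ⟨k, rfl⟩, Or.inr ⟨k, rfl⟩]

lemma mem_symbols : x ∈ symbols n ↔ 2 ≤ symIndex x ∧ symIndex x ≤ n - 2 := by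
  rcases eq_vtx_or_eq_edg x with ⟨k, rfl⟩ | ⟨k, rfl⟩ <;> simp [symbols]

lemma symIndex_opposite : symIndex (opposite n x) = n - symIndex x := by
  rcases eq_vtx_or_eq_edg x with ⟨k, rfl⟩ | ⟨k, rfl⟩ <;> rfl

lemma opposite_opposite (h : symIndex x ≤ n) : opposite n (opposite n x) = x := by
  rcases eq_vtx_or_eq_edg x with ⟨k, rfl⟩ | ⟨k, rfl⟩ <;> simp_all [Nat.sub_sub_self]

lemma opposite_mem_symbols (h : x ∈ symbols n) : opposite n x ∈ symbols n := by
  rw [mem_symbols] at h ⊢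
  rw [symIndex_opposite]
  omega

lemma mem_dual : x ∈ dual n χ ↔ x ∈ symbols n ∧ opposite n x ∉ χ := by
  rcases eq_vtx_or_eq_edg x with ⟨k, rfl⟩ | ⟨k, rfl⟩ <;> simp [dual, symbols, and_assoc]

lemma mem_of_dual_eq (hd : dual n χ = χ) : x ∈ χ ↔ x ∈ symbols n ∧ opposite n x ∉ χ := by
  rw [← mem_dual, hd]

end Symbols

lemma IsCode.edges_of_vtx_mem {n i : ℕ} {χ : Finset ESym} (hχ : IsCode n χ) (hv : vtx i ∈ χ) :
    edg i ∈ χ ∧ (edg (i + 1) ∈ χ ∨ i = n - 2) :=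
  hχ.2 i (Finset.mem_Icc.mpr (by simpa [mem_symbols] using hχ.1 hv)) hv

lemma IsCode.inter_symbols {n k : ℕ} {χ : Finset ESym} (hχ : IsCode n χ) (hk : k ≤ n) :
    IsCode k (χ ∩ symbols k) := by
  refine ⟨Finset.inter_subset_right, fun i hi hv => ?_⟩
  rw [Finset.mem_Icc] at hi
  rw [Finset.mem_inter] at hv
  obtain ⟨he, hnext⟩ := hχ.2 i (Finset.mem_Icc.mpr ⟨hi.1, by omega⟩) hv.1
  refine ⟨Finset.mem_inter.mpr ⟨he, mem_symbols.mpr hi⟩, ?_⟩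
  by_cases hlast : i = k - 2
  · exact Or.inr hlast
  · refine Or.inl (Finset.mem_inter.mpr ⟨?_, mem_symbols.mpr (by simp; omega)⟩)
    exact hnext.resolve_right (by omega)

section SelfDual

variable {m : ℕ} {χ : Finset ESym}

theorem edg_mem_and_vtx_not_mem_of_dual_eq (hm : 2 ≤ m) (hc : IsCode (2 * m) χ)
    (hd : dual (2 * m) χ = χ) : edg m ∈ χ ∧ vtx m ∉ χ := by
  have hrange : m ∈ Finset.Icc 2 (2 * m - 2) := Finset.mem_Icc.mpr ⟨hm, by omega⟩
  have hdual : vtx m ∈ χ ↔ edg m ∉ χ := by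
    rw [mem_of_dual_eq hd, opposite_vtx, show 2 * m - m = m by omega]
    simp [mem_symbols, Finset.mem_Icc.mp hrange]
  have hcode : vtx m ∈ χ → edg m ∈ χ := fun h => (hc.2 m hrange h).1
  tauto

theorem eq_of_inter_symbols_eq (hm : 2 ≤ m) {χ' : Finset ESym}
    (hc : IsCode (2 * m) χ) (hd : dual (2 * m) χ = χ)
    (hc' : IsCode (2 * m) χ') (hd' : dual (2 * m) χ' = χ')
    (h : χ ∩ symbols (m + 1) = χ' ∩ symbols (m + 1)) : χ = χ' := by
  have hlow : ∀ x ∈ symbols (m + 1), x ∈ χ ↔ x ∈ χ' := fun x hx => by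
    simpa [hx] using Finset.ext_iff.mp h x
  ext x
  by_cases hx : x ∈ symbols (m + 1)
  · exact hlow x hx
  by_cases hxm : symIndex x = m
  · have := edg_mem_and_vtx_not_mem_of_dual_eq hm hc hd
    have := edg_mem_and_vtx_not_mem_of_dual_eq hm hc' hd'
    rcases eq_vtx_or_eq_edg x with ⟨k, rfl⟩ | ⟨k, rfl⟩ <;> simp_all
  rw [mem_of_dual_eq hd, mem_of_dual_eq hd']
  refine and_congr_right fun hx2 => not_congr (hlow _ ?_)
  rw [mem_symbols] at hx hx2 ⊢
  rw [symIndex_opposite]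
  omega

end SelfDual

/-- The self-dual code of complexity `2m` whose lower half is `ψ`. -/
def extend (m : ℕ) (ψ : Finset ESym) : Finset ESym :=
  ψ ∪ {edg m} ∪ (dual (2 * m) ψ).filter (fun x => m < symIndex x)

section Extend

variable {m : ℕ} {ψ : Finset ESym} {x : ESym}

lemma mem_extend_of_lt (h : symIndex x < m) : x ∈ extend m ψ ↔ x ∈ ψ := by
  have : x ≠ edg m := by rintro rfl; simp at h
  simp [extend, this]
  omega

lemma symIndex_lt_of_mem (hψ : ψ ⊆ symbols (m + 1)) (hx : x ∈ ψ) : symIndex x < m := by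
  have := mem_symbols.mp (hψ hx)
  omega

lemma mem_extend_of_gt (hψ : ψ ⊆ symbols (m + 1)) (h : m < symIndex x) :
    x ∈ extend m ψ ↔ x ∈ dual (2 * m) ψ := by
  have hxψ : x ∉ ψ := fun hx => by have := symIndex_lt_of_mem hψ hx; omega
  have : x ≠ edg m := by rintro rfl; simp at h
  simp [extend, hxψ, this, h]

lemma edg_mem_extend : edg m ∈ extend m ψ := by simp [extend]

lemma vtx_not_mem_extend (hψ : ψ ⊆ symbols (m + 1)) : vtx m ∉ extend m ψ := by
  have hv : vtx m ∉ ψ := fun hx => by have := symIndex_lt_of_mem hψ hx; simp at this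
  simp [extend, hv]

lemma extend_subset_symbols (hm : 2 ≤ m) (hψ : ψ ⊆ symbols (m + 1)) :
    extend m ψ ⊆ symbols (2 * m) := by
  intro x hx
  simp only [extend, Finset.mem_union, Finset.mem_singleton, Finset.mem_filter] at hx
  rcases hx with (hx | rfl) | ⟨hx, -⟩
  · have := mem_symbols.mp (hψ hx)
    exact mem_symbols.mpr (by omega)
  · exact mem_symbols.mpr (by rw [symIndex_edg]; omega)
  · exact (mem_dual.mp hx).1

lemma extend_inter_symbols (hψ : ψ ⊆ symbols (m + 1)) : extend m ψ ∩ symbols (m + 1) = ψ := by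
  ext x
  rw [Finset.mem_inter]
  by_cases hx : x ∈ symbols (m + 1)
  · have := mem_symbols.mp hx
    rw [mem_extend_of_lt (by omega)]
    tauto
  · exact ⟨fun h => absurd h.2 hx, fun h => absurd (hψ h) hx⟩

lemma dual_extend (hm : 2 ≤ m) (hψ : ψ ⊆ symbols (m + 1)) :
    dual (2 * m) (extend m ψ) = extend m ψ := by
  ext x
  rw [mem_dual]
  by_cases hx : x ∈ symbols (2 * m)
  · have hbounds := mem_symbols.mp hx
    have hopp := opposite_mem_symbols hx
    rcases lt_trichotomy (symIndex x) m with hlt | heq | hgt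
    · rw [mem_extend_of_lt hlt, mem_extend_of_gt hψ (by rw [symIndex_opposite]; omega), mem_dual,
        opposite_opposite (by omega)]
      tauto
    · have hmm : 2 * m - m = m := by omega
      obtain ⟨k, rfl⟩ | ⟨k, rfl⟩ := eq_vtx_or_eq_edg x <;> obtain rfl : k = m := heq
      · simp [hmm, edg_mem_extend, vtx_not_mem_extend hψ]
      · simp [hx, hmm, edg_mem_extend, vtx_not_mem_extend hψ]
    · rw [mem_extend_of_lt (by rw [symIndex_opposite]; omega), mem_extend_of_gt hψ hgt, mem_dual]
  · exact ⟨fun h => absurd h.1 hx, fun h => absurd (extend_subset_symbols hm hψ h) hx⟩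

lemma isCode_extend (hm : 2 ≤ m) (hψ : IsCode (m + 1) ψ) : IsCode (2 * m) (extend m ψ) := by
  refine ⟨extend_subset_symbols hm hψ.1, fun i hi hv => ?_⟩
  rw [Finset.mem_Icc] at hi
  rcases lt_trichotomy i m with hlt | rfl | hgt
  · rw [mem_extend_of_lt hlt] at hv
    obtain ⟨he, hnext⟩ := hψ.edges_of_vtx_mem hv
    refine ⟨(mem_extend_of_lt hlt).mpr he, Or.inl ?_⟩
    rcases hnext with hnext | hlast
    · exact (mem_extend_of_lt (symIndex_lt_of_mem hψ.1 hnext)).mpr hnext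
    · rw [show i + 1 = m by omega]
      exact edg_mem_extend
  · exact absurd hv (vtx_not_mem_extend hψ.1)
  · rw [mem_extend_of_gt (x := vtx i) hψ.1 hgt, mem_dual, opposite_vtx] at hv
    refine ⟨(mem_extend_of_gt (x := edg i) hψ.1 hgt).mpr (mem_dual.mpr ⟨mem_symbols.mpr hi,
      fun h => hv.2 (hψ.edges_of_vtx_mem h).1⟩), ?_⟩
    by_cases hlast : i = 2 * m - 2
    · exact Or.inr hlast
    refine Or.inl ((mem_extend_of_gt (x := edg (i + 1)) hψ.1 (by rw [symIndex_edg]; omega)).mpr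
      (mem_dual.mpr ⟨mem_symbols.mpr (by rw [symIndex_edg]; omega), fun h => ?_⟩))
    -- `v_{2m-i-1} ∈ ψ` would force `e_{2m-i} ∈ ψ`, contradicting `v_i ∈ extend m ψ`
    rcases (hψ.edges_of_vtx_mem h).2 with hnext | hend
    · rw [show 2 * m - (i + 1) + 1 = 2 * m - i by omega] at hnext
      exact hv.2 hnext
    · omega

end Extend

/-- Any self-dual code of complexity `2m` (`m ≥ 2`) contains `e_m` and omits
`v_m`, and `χ ↦ χ ∩ S_{m+1}` is a bijection from the set of self-dual codes of
complexity `2m` onto the set of all codes of complexity `m+1`. -/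
theorem stmt7 (m : ℕ) (hm : 2 ≤ m) :
    (∀ χ : Finset ESym, IsCode (2 * m) χ → dual (2 * m) χ = χ →
        edg m ∈ χ ∧ vtx m ∉ χ) ∧
    Set.BijOn (fun χ : Finset ESym => χ ∩ symbols (m + 1))
      {χ | IsCode (2 * m) χ ∧ dual (2 * m) χ = χ}
      {χ | IsCode (m + 1) χ} := by
  refine ⟨fun χ hc hd => edg_mem_and_vtx_not_mem_of_dual_eq hm hc hd, ?_, ?_, ?_⟩
  · rintro χ ⟨hc, -⟩
    exact hc.inter_symbols (by omega)
  · rintro χ ⟨hc, hd⟩ χ' ⟨hc', hd'⟩ h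
    exact eq_of_inter_symbols_eq hm hc hd hc' hd' h
  · intro ψ hψ
    exact ⟨extend m ψ, ⟨isCode_extend hm hψ, dual_extend hm hψ.1⟩, extend_inter_symbols hψ.1⟩
end

section
/- A lattice is distributive if and only if it contains no sublattice isomorphic to the diamond lattice M_3 or the pentagon lattice N_5. -/
/-!
A failure of modularity, `x ≤ z` with `(x ⊔ y) ⊓ z ≰ x ⊔ y ⊓ z`, is itself a pentagon: the chain
`y ⊓ z < x ⊔ y ⊓ z < (x ⊔ y) ⊓ z < x ⊔ y` together with `y`. In a modular lattice where
`a ⊓ (b ⊔ c) ≠ a ⊓ b ⊔ a ⊓ c`, the lower and upper medians `o ≤ i` of `a, b, c` differ, and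
Dedekind's projections `t ↦ t ⊓ i ⊔ o` of `a, b, c` into `[o, i]` form a diamond.
Conversely, distributivity collapses `a` to `o` in a diamond and `a` to `b` in a pentagon.
-/

section

variable {α : Type*} [Lattice α]

def IsDiamond (o i a b c : α) : Prop :=
  a ⊓ b = o ∧ a ⊓ c = o ∧ b ⊓ c = o ∧ a ⊔ b = i ∧ a ⊔ c = i ∧ b ⊔ c = i

def IsPentagon (o i a b c : α) : Prop :=
  b < a ∧ a ⊓ c = o ∧ b ⊓ c = o ∧ a ⊔ c = i ∧ b ⊔ c = i

variable (α) in
def HasDiamondSublattice : Prop :=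
  ∃ o i a b c : α, ([o, i, a, b, c] : List α).Nodup ∧ IsDiamond o i a b c

variable (α) in
def HasPentagonSublattice : Prop :=
  ∃ o i a b c : α, ([o, i, a, b, c] : List α).Nodup ∧ IsPentagon o i a b c

namespace IsDiamond

variable {o i a b c : α}

theorem rotate (h : IsDiamond o i a b c) : IsDiamond o i b c a := by
  obtain ⟨hab, hac, hbc, sab, sac, sbc⟩ := h
  exact ⟨hbc, inf_comm b a ▸ hab, inf_comm c a ▸ hac, sbc, sup_comm b a ▸ sab, sup_comm c a ▸ sac⟩

theorem bot_ne_left (h : IsDiamond o i a b c) (hoi : o ≠ i) : o ≠ a := by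
  obtain ⟨hab, hac, hbc, sab, sac, sbc⟩ := h
  rintro rfl
  have hb : b = i := by rwa [sup_eq_right.mpr (hab ▸ inf_le_right)] at sab
  have hc : c = i := by rwa [sup_eq_right.mpr (hac ▸ inf_le_right)] at sac
  rw [hb, hc, inf_idem] at hbc
  exact hoi hbc.symm

theorem top_ne_left (h : IsDiamond o i a b c) (hoi : o ≠ i) : i ≠ a := by
  obtain ⟨hab, hac, hbc, sab, sac, sbc⟩ := h
  rintro rfl
  have hb : b = o := by rwa [inf_eq_right.mpr (sab ▸ le_sup_right)] at hab
  have hc : c = o := by rwa [inf_eq_right.mpr (sac ▸ le_sup_right)] at hac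
  rw [hb, hc, sup_idem] at sbc
  exact hoi sbc

theorem left_ne_middle (h : IsDiamond o i a b c) (hoi : o ≠ i) : a ≠ b := by
  obtain ⟨hab, -, -, sab, -, -⟩ := h
  rintro rfl
  rw [inf_idem] at hab
  rw [sup_idem] at sab
  exact hoi (hab.symm.trans sab)

theorem nodup (h : IsDiamond o i a b c) (hoi : o ≠ i) : ([o, i, a, b, c] : List α).Nodup := by
  have hb := h.rotate
  have hc := hb.rotate
  simp [hoi, h.bot_ne_left hoi, h.top_ne_left hoi, hb.bot_ne_left hoi, hb.top_ne_left hoi,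
    hc.bot_ne_left hoi, hc.top_ne_left hoi, h.left_ne_middle hoi, hb.left_ne_middle hoi,
    (hc.left_ne_middle hoi).symm]

end IsDiamond

namespace IsPentagon

variable {o i a b c : α}

theorem nodup (h : IsPentagon o i a b c) : ([o, i, a, b, c] : List α).Nodup := by
  obtain ⟨hba, hac, hbc, sac, sbc⟩ := h
  have hob : o ≤ b := hbc ▸ inf_le_left
  have hai : a ≤ i := sac ▸ le_sup_left
  have hca : ¬ c ≤ a := fun hca ↦ by
    rw [inf_eq_right.mpr hca] at hac
    rw [sup_eq_left.mpr (hac ▸ hob)] at sbc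
    exact (hba.trans_le (sbc ▸ hai)).false
  have hoc : o < c := lt_of_le_of_ne (hac ▸ inf_le_right) fun heq ↦ hca (heq ▸ hac ▸ inf_le_left)
  have hci : c < i := lt_of_le_of_ne (sac ▸ le_sup_right) fun heq ↦ by
    rw [inf_eq_left.mpr (heq ▸ hai)] at hac
    exact (hba.trans_le (hac ▸ hob)).false
  have hob_lt : o < b := lt_of_le_of_ne hob fun heq ↦ by
    rw [sup_eq_right.mpr (inf_eq_left.mp (heq ▸ hbc))] at sbc
    exact hci.ne sbc
  have hai_lt : a < i := lt_of_le_of_ne hai fun heq ↦ hca (heq ▸ hci.le)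
  have hbc' : b ≠ c := fun heq ↦ hca (heq ▸ hba.le)
  have hac' : a ≠ c := fun heq ↦ hca heq.ge
  simp [(hob_lt.trans (hba.trans hai_lt)).ne, (hob_lt.trans hba).ne, hob_lt.ne, hoc.ne, hai_lt.ne',
    (hba.trans hai_lt).ne', hci.ne', hba.ne', hbc', hac']

end IsPentagon

theorem isPentagon_of_not_sup_inf_le {x z : α} (y : α) (hxz : x ≤ z)
    (h : ¬ (x ⊔ y) ⊓ z ≤ x ⊔ y ⊓ z) :
    IsPentagon (y ⊓ z) (x ⊔ y) ((x ⊔ y) ⊓ z) (x ⊔ y ⊓ z) y := by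
  have hba : x ⊔ y ⊓ z < (x ⊔ y) ⊓ z :=
    lt_of_le_not_ge (le_inf (sup_le_sup_left inf_le_left x) (sup_le hxz inf_le_right)) h
  have hac : (x ⊔ y) ⊓ z ⊓ y = y ⊓ z := by
    rw [inf_right_comm, inf_eq_right.mpr (le_sup_right : y ≤ x ⊔ y)]
  have hbc : (x ⊔ y ⊓ z) ⊓ y = y ⊓ z :=
    le_antisymm ((inf_le_inf_right y hba.le).trans hac.le) (le_inf le_sup_right inf_le_left)
  have hxy : x ⊔ y ≤ x ⊔ y ⊓ z ⊔ y := sup_le_sup_right le_sup_left y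
  have hai : (x ⊔ y) ⊓ z ⊔ y = x ⊔ y :=
    le_antisymm (sup_le inf_le_left le_sup_right) (hxy.trans (sup_le_sup_right hba.le y))
  have hbi : x ⊔ y ⊓ z ⊔ y = x ⊔ y :=
    le_antisymm ((sup_le_sup_right hba.le y).trans hai.le) hxy
  exact ⟨hba, hac, hbc, hai, hbi⟩

def lowerMedian (a b c : α) : α := a ⊓ b ⊔ b ⊓ c ⊔ c ⊓ a

def upperMedian (a b c : α) : α := (a ⊔ b) ⊓ (b ⊔ c) ⊓ (c ⊔ a)

theorem lowerMedian_rotate (a b c : α) : lowerMedian b c a = lowerMedian a b c := by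
  simp only [lowerMedian]; ac_rfl

theorem upperMedian_rotate (a b c : α) : upperMedian b c a = upperMedian a b c := by
  simp only [upperMedian]; ac_rfl

theorem lowerMedian_le_upperMedian (a b c : α) : lowerMedian a b c ≤ upperMedian a b c :=
  sup_le (sup_le (le_inf (le_inf (inf_le_left.trans le_sup_left) (inf_le_right.trans le_sup_left))
        (inf_le_left.trans le_sup_right))
      (le_inf (le_inf (inf_le_left.trans le_sup_right) (inf_le_left.trans le_sup_left))
        (inf_le_right.trans le_sup_left)))
    (le_inf (le_inf (inf_le_right.trans le_sup_left) (inf_le_left.trans le_sup_right))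
      (inf_le_left.trans le_sup_left))

theorem inf_upperMedian (a b c : α) : a ⊓ upperMedian a b c = a ⊓ (b ⊔ c) :=
  le_antisymm (le_inf inf_le_left (inf_le_right.trans (inf_le_left.trans inf_le_right)))
    (le_inf inf_le_left (le_inf (le_inf (inf_le_left.trans le_sup_left) inf_le_right)
      (inf_le_left.trans le_sup_right)))

theorem sup_lowerMedian (a b c : α) : a ⊔ lowerMedian a b c = a ⊔ b ⊓ c :=
  inf_upperMedian (α := αᵒᵈ) a b c

section IsModularLattice

variable [IsModularLattice α]

theorem inf_lowerMedian (a b c : α) : a ⊓ lowerMedian a b c = a ⊓ b ⊔ a ⊓ c := calc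
  a ⊓ lowerMedian a b c = a ⊓ (b ⊓ c ⊔ a ⊓ b) ⊔ c ⊓ a := by
    rw [inf_sup_assoc_of_le _ inf_le_right, lowerMedian, sup_comm (a ⊓ b) (b ⊓ c)]
  _ = a ⊓ (b ⊓ c) ⊔ a ⊓ b ⊔ c ⊓ a := by
    rw [← inf_sup_assoc_of_le (b ⊓ c) (inf_le_left : a ⊓ b ≤ a)]
  _ = a ⊓ b ⊔ a ⊓ c := by
    rw [sup_eq_right.mpr (inf_le_inf_left a inf_le_left), inf_comm c]

theorem inf_sup_lowerMedian_eq (a b c : α) :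
    a ⊓ upperMedian a b c ⊔ lowerMedian a b c = (a ⊔ lowerMedian a b c) ⊓ upperMedian a b c := by
  rw [sup_comm, ← sup_inf_assoc_of_le _ (lowerMedian_le_upperMedian a b c), sup_comm]

theorem inf_sup_lowerMedian_inf (a b c : α) :
    (a ⊓ upperMedian a b c ⊔ lowerMedian a b c) ⊓ (b ⊓ upperMedian a b c ⊔ lowerMedian a b c) =
      lowerMedian a b c := by
  set o := lowerMedian a b c
  set x := a ⊓ upperMedian a b c ⊔ o
  have hxb : x ⊓ b ≤ o := calc
    x ⊓ b ≤ (b ⊓ c ⊔ a) ⊓ b := by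
      rw [sup_comm _ a, ← sup_lowerMedian]
      exact inf_le_inf_right b (sup_le_sup_right inf_le_left o)
    _ = b ⊓ c ⊔ a ⊓ b := by rw [sup_inf_assoc_of_le _ inf_le_left]
    _ ≤ o := sup_le (le_sup_right.trans le_sup_left) (le_sup_left.trans le_sup_left)
  rw [← inf_sup_assoc_of_le _ le_sup_right, sup_eq_right]
  exact (inf_le_inf_left x inf_le_left).trans hxb

-- The projection is self-dual by `inf_sup_lowerMedian_eq`, and `αᵒᵈ` swaps the two medians.
theorem inf_sup_lowerMedian_sup (a b c : α) :
    (a ⊓ upperMedian a b c ⊔ lowerMedian a b c) ⊔ (b ⊓ upperMedian a b c ⊔ lowerMedian a b c) =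
      upperMedian a b c := by
  rw [inf_sup_lowerMedian_eq, ← upperMedian_rotate, ← lowerMedian_rotate, inf_sup_lowerMedian_eq,
    upperMedian_rotate, lowerMedian_rotate]
  exact inf_sup_lowerMedian_inf (α := αᵒᵈ) a b c

end IsModularLattice

theorem exists_isDiamond_lowerMedian_upperMedian [IsModularLattice α] (a b c : α) :
    ∃ x y z : α, IsDiamond (lowerMedian a b c) (upperMedian a b c) x y z := by
  have hbc := inf_sup_lowerMedian_inf b c a
  have sbc := inf_sup_lowerMedian_sup b c a
  have hca := inf_sup_lowerMedian_inf c a b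
  have sca := inf_sup_lowerMedian_sup c a b
  rw [lowerMedian_rotate, upperMedian_rotate] at hbc sbc
  rw [lowerMedian_rotate b c a, upperMedian_rotate b c a, lowerMedian_rotate,
    upperMedian_rotate, inf_comm] at hca
  rw [lowerMedian_rotate b c a, upperMedian_rotate b c a, lowerMedian_rotate,
    upperMedian_rotate, sup_comm] at sca
  exact ⟨_, _, _, inf_sup_lowerMedian_inf a b c, hca, hbc, inf_sup_lowerMedian_sup a b c, sca, sbc⟩

theorem lowerMedian_ne_upperMedian [IsModularLattice α] {a b c : α}
    (h : a ⊓ (b ⊔ c) ≠ a ⊓ b ⊔ a ⊓ c) : lowerMedian a b c ≠ upperMedian a b c :=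
  fun heq ↦ h (by rw [← inf_upperMedian, ← heq, inf_lowerMedian])

theorem HasDiamondSublattice.of_inf_sup_ne [IsModularLattice α] {a b c : α}
    (h : a ⊓ (b ⊔ c) ≠ a ⊓ b ⊔ a ⊓ c) : HasDiamondSublattice α := by
  obtain ⟨x, y, z, hd⟩ := exists_isDiamond_lowerMedian_upperMedian a b c
  exact ⟨_, _, x, y, z, hd.nodup (lowerMedian_ne_upperMedian h), hd⟩

theorem isModularLattice_of_not_hasPentagonSublattice (h : ¬ HasPentagonSublattice α) :
    IsModularLattice α where
  sup_inf_le_assoc_of_le y _ hxz := by_contra fun hle ↦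
    have hp := isPentagon_of_not_sup_inf_le y hxz hle
    h ⟨_, _, _, _, _, hp.nodup, hp⟩

theorem inf_sup_left_of_not_hasDiamondSublattice_of_not_hasPentagonSublattice
    (hd : ¬ HasDiamondSublattice α) (hp : ¬ HasPentagonSublattice α) (a b c : α) :
    a ⊓ (b ⊔ c) = a ⊓ b ⊔ a ⊓ c := by
  have := isModularLattice_of_not_hasPentagonSublattice hp
  by_contra h
  exact hd (.of_inf_sup_ne h)

end

section DistribLattice

variable {α : Type*} [DistribLattice α]

theorem IsDiamond.left_eq_bot {o i a b c : α} (h : IsDiamond o i a b c) : a = o := by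
  obtain ⟨hab, hac, -, sab, -, sbc⟩ := h
  calc a = a ⊓ (b ⊔ c) := by rw [sbc, ← sab, inf_sup_self]
    _ = o := by rw [inf_sup_left, hab, hac, sup_idem]

theorem not_isPentagon (o i a b c : α) : ¬ IsPentagon o i a b c := by
  rintro ⟨hba, hac, hbc, sac, sbc⟩
  have : a = b := calc
    a = a ⊓ (b ⊔ c) := by rw [sbc, ← sac, inf_sup_self]
    _ = b := by rw [inf_sup_left, inf_eq_right.mpr hba.le, hac, ← hbc, sup_inf_self]
  exact hba.ne' this

variable (α)

theorem not_hasDiamondSublattice : ¬ HasDiamondSublattice α :=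
  fun ⟨o, _, a, _, _, hnd, hd⟩ ↦ by
    rw [hd.left_eq_bot] at hnd
    simp at hnd

theorem not_hasPentagonSublattice : ¬ HasPentagonSublattice α :=
  fun ⟨o, i, a, b, c, _, hp⟩ ↦ not_isPentagon o i a b c hp

end DistribLattice

/-- A lattice is distributive iff it contains no sublattice isomorphic to the
diamond `M₃` or the pentagon `N₅`. -/
theorem stmt13 {α : Type*} [Lattice α] :
    ((∀ a b c : α, a ⊓ (b ⊔ c) = (a ⊓ b) ⊔ (a ⊓ c)) ∧
      (∀ a b c : α, a ⊔ (b ⊓ c) = (a ⊔ b) ⊓ (a ⊔ c))) ↔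
    ¬ ((∃ o i a b c : α, ([o, i, a, b, c] : List α).Nodup ∧
          a ⊓ b = o ∧ a ⊓ c = o ∧ b ⊓ c = o ∧
          a ⊔ b = i ∧ a ⊔ c = i ∧ b ⊔ c = i) ∨
        (∃ o i a b c : α, ([o, i, a, b, c] : List α).Nodup ∧
          b < a ∧ a ⊓ c = o ∧ b ⊓ c = o ∧ a ⊔ c = i ∧ b ⊔ c = i)) := by
  change _ ↔ ¬ (HasDiamondSublattice α ∨ HasPentagonSublattice α)
  rw [not_or]
  constructor
  · rintro ⟨hinf, -⟩
    let := DistribLattice.ofInfSupLe fun a b c ↦ (hinf a b c).le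
    exact ⟨not_hasDiamondSublattice α, not_hasPentagonSublattice α⟩
  · rintro ⟨hd, hp⟩
    let := DistribLattice.ofInfSupLe fun a b c ↦
      (inf_sup_left_of_not_hasDiamondSublattice_of_not_hasPentagonSublattice hd hp a b c).le
    exact ⟨inf_sup_left, sup_inf_left⟩
end
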